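/- arXiv:1709.06803 — 4 statements merged into one kernel-verified Lean document; each statement's English description precedes it below -/
import Mathlib

section
/- Let F(x) = Σ_{s=1}^{n} κ_s f_s(x) be the Lagrange interpolation polynomial at pairwise distinct nodes a_1,...,a_n with values κ_1,...,κ_n, and write F(x) = Σ_{i=0}^{n-1} F_i x^i. Then there exists a rational function M_1 of (a_1,...,a_n,κ_1,...,κ_n) such that ∂F_i/∂a_1 = M_1 · ∂F_i/∂κ_1 for every i = 0,...,n-1 (the same M_1 for all i). Explicitly, M_1 = M_1' · ∏_{j=2}^{n}(a_1 - a_j), where M_1' = ∂/∂a_1 [κ_1/∏_{j=2}^{n}(a_1-a_j)] + Σ_{s=2}^{n} κ_s / [(a_s - a_1)^2 ∏_{j≠1,s}(a_s - a_j)]. -/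
/-!
Moving the node `a_k` to `t` and its value to `u` changes the interpolant only by a multiple
`c(t, u) P` of the nodal polynomial `P = ∏_{j ≠ k} (X - a_j)` of the other nodes (Newton's form),
where `c(t, u) = (u - Q(t)) / P(t)` and `Q` interpolates the other nodes. Hence, coefficientwise,
`∂F_i/∂a_k = ∂_t c · P_i` and `∂F_i/∂κ_k = P_i / P(a_k)`, so `M = ∂_t c · P(a_k)` serves
every `i`.
The barycentric formula `Q(t) / P(t) = ∑_s w_s κ_s / (t - a_s)`, with the nodal weights `w_s`,
makes `∂_t c` explicit.
-/
open Finset Polynomial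

theorem Set.InjOn.update_of_forall_ne {α β : Type*} [DecidableEq α] {s : Finset α}
    {f : α → β} {a : α} (ha : a ∈ s) (hf : Set.InjOn f (s.erase a)) {b : β}
    (hb : ∀ j ∈ s.erase a, b ≠ f j) : Set.InjOn (Function.update f a b) s := by
  rw [← insert_erase ha, coe_insert, Set.injOn_insert (by simp)]
  refine ⟨hf.congr fun j hj => (Function.update_of_ne (ne_of_mem_erase hj) b f).symm, ?_⟩
  rintro ⟨j, hj, hja⟩
  rw [Function.update_self, Function.update_of_ne (ne_of_mem_erase hj)] at hja
  exact hb j hj hja.symm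

namespace Lagrange

section Field

variable {F ι : Type*} [Field F] [DecidableEq ι] {s : Finset ι} {v : ι → F} {i : ι}

theorem interpolate_update_eq_add_nodal_erase (r : ι → F) (hi : i ∈ s)
    (hvs : Set.InjOn v (s.erase i)) {x : F} (hx : ∀ j ∈ s.erase i, x ≠ v j) (y : F) :
    interpolate s (Function.update v i x) (Function.update r i y) =
      interpolate (s.erase i) v r +
        C ((y - eval x (interpolate (s.erase i) v r)) / eval x (nodal (s.erase i) v)) *
          nodal (s.erase i) v := by
  have hxP : eval x (nodal (s.erase i) v) ≠ 0 := eval_nodal_not_at_node hx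
  have hcard : (#(s.erase i) : WithBot ℕ) < #s := by exact_mod_cast card_erase_lt_of_mem hi
  symm
  refine eq_interpolate_of_eval_eq _ (hvs.update_of_forall_ne hi hx) ?_ fun j hj => ?_
  · refine (degree_add_le _ _).trans_lt (max_lt ((degree_interpolate_lt r hvs).trans hcard) ?_)
    exact (degree_mul_le _ _).trans_lt (by grw [degree_C_le, degree_nodal, zero_add]; exact hcard)
  · rcases eq_or_ne j i with rfl | hji
    · simp [div_mul_cancel₀ _ hxP]
    · have hj' : j ∈ s.erase i := mem_erase.2 ⟨hji, hj⟩
      rw [Function.update_of_ne hji, Function.update_of_ne hji, eval_add, eval_mul,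
        eval_nodal_at_node hj', mul_zero, add_zero, eval_interpolate_at_node r hvs hj']

end Field

section NontriviallyNormedField

variable {𝕜 ι : Type*} [NontriviallyNormedField 𝕜] [DecidableEq ι] {s : Finset ι}
  {v : ι → 𝕜} {i : ι} {x : 𝕜}

theorem hasDerivAt_coeff_interpolate_update_value (m : ℕ) (r : ι → 𝕜) (hi : i ∈ s)
    (hvs : Set.InjOn v s) (y : 𝕜) :
    HasDerivAt (fun y => (interpolate s v (Function.update r i y)).coeff m)
      ((nodal (s.erase i) v).coeff m / eval (v i) (nodal (s.erase i) v)) y := by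
  have hx : ∀ j ∈ s.erase i, v i ≠ v j := fun j hj =>
    hvs.ne hi (mem_of_mem_erase hj) (ne_of_mem_erase hj).symm
  have hnewton (y : 𝕜) : interpolate s v (Function.update r i y) =
      interpolate (s.erase i) v r +
        C ((y - eval (v i) (interpolate (s.erase i) v r)) / eval (v i) (nodal (s.erase i) v)) *
          nodal (s.erase i) v := by
    rw [← interpolate_update_eq_add_nodal_erase r hi (hvs.mono (erase_subset i s)) hx y,
      Function.update_eq_self]
  simp only [hnewton, coeff_add, coeff_C_mul]
  refine ((((hasDerivAt_id' y).sub_const _).div_const _).mul_const _ |>.const_add _).congr_deriv ?_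
  exact one_div_mul_eq_div _ _

theorem hasDerivAt_coeff_interpolate_update_node (m : ℕ) (r : ι → 𝕜) (hi : i ∈ s)
    (hvs : Set.InjOn v (s.erase i)) (hx : ∀ j ∈ s.erase i, x ≠ v j) {c' : 𝕜}
    (hc : HasDerivAt (fun t => (r i - eval t (interpolate (s.erase i) v r)) /
      eval t (nodal (s.erase i) v)) c' x) :
    HasDerivAt (fun t => (interpolate s (Function.update v i t) r).coeff m)
      (c' * (nodal (s.erase i) v).coeff m) x := by
  refine (hc.mul_const _ |>.const_add ((interpolate (s.erase i) v r).coeff m))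
    |>.congr_of_eventuallyEq ?_
  have hnear : ∀ᶠ t in nhds x, ∀ j ∈ s.erase i, t ≠ v j :=
    (Finset.eventually_all _).2 fun j hj => eventually_ne_nhds (hx j hj)
  filter_upwards [hnear] with t ht
  rw [← coeff_C_mul, ← coeff_add, ← interpolate_update_eq_add_nodal_erase r hi hvs ht,
    Function.update_eq_self]

theorem hasDerivAt_eval_interpolate_div_eval_nodal (r : ι → 𝕜) (hx : ∀ j ∈ s, x ≠ v j) :
    HasDerivAt (fun t => eval t (interpolate s v r) / eval t (nodal s v))
      (-∑ j ∈ s, nodalWeight s v j * r j / (x - v j) ^ 2) x := by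
  have hterm : ∀ j ∈ s, HasDerivAt (fun t => nodalWeight s v j * (t - v j)⁻¹ * r j)
      (-(nodalWeight s v j * r j / (x - v j) ^ 2)) x := fun j hj => by
    refine ((((hasDerivAt_id' x).sub_const (v j)).fun_inv (sub_ne_zero.2 (hx j hj))).const_mul
      (nodalWeight s v j) |>.mul_const (r j)).congr_deriv ?_
    ring
  rw [← sum_neg_distrib]
  refine (HasDerivAt.fun_sum hterm).congr_of_eventuallyEq ?_
  have hnear : ∀ᶠ t in nhds x, ∀ j ∈ s, t ≠ v j :=
    (Finset.eventually_all _).2 fun j hj => eventually_ne_nhds (hx j hj)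
  filter_upwards [hnear] with t ht
  rw [eval_interpolate_not_at_node r ht, mul_div_cancel_left₀ _ (eval_nodal_not_at_node ht)]

theorem hasDerivAt_sub_eval_interpolate_div_eval_nodal (r : ι → 𝕜) (y : 𝕜)
    (hx : ∀ j ∈ s, x ≠ v j) :
    HasDerivAt (fun t => (y - eval t (interpolate s v r)) / eval t (nodal s v))
      (deriv (fun t => y / ∏ j ∈ s, (t - v j)) x +
        ∑ j ∈ s, r j / ((v j - x) ^ 2 * ∏ l ∈ s.erase j, (v j - v l))) x := by
  have hy : HasDerivAt (fun t => y / eval t (nodal s v))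
      (deriv (fun t => y / ∏ j ∈ s, (t - v j)) x) x := by
    simp only [← eval_nodal]
    exact ((differentiableAt_const y).div (nodal s v).differentiableAt
      (eval_nodal_not_at_node hx)).hasDerivAt
  simp only [sub_div]
  refine (hy.sub (hasDerivAt_eval_interpolate_div_eval_nodal r hx)).congr_deriv ?_
  rw [sub_neg_eq_add]
  congr 1
  refine sum_congr rfl fun j _ => ?_
  rw [nodalWeight, prod_inv_distrib, sub_sq_comm]
  field_simp

end NontriviallyNormedField

end Lagrange

/-- Lemma `commfact` for the node `a k`, playing the role of `a_1`:
there exists a quantity `M₁` (explicitly given) such that for every coefficient index `i`,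
`∂F_i/∂a_1 = M₁ · ∂F_i/∂κ_1`, where `F_i` is the `i`-th coefficient of the Lagrange
interpolation polynomial through the points `(a_s, κ_s)`.  Explicitly,
`M₁ = M₁' · ∏_{j≠1}(a_1 - a_j)` with
`M₁' = ∂/∂a_1 [κ_1/∏_{j≠1}(a_1-a_j)] + Σ_{s≠1} κ_s/((a_s-a_1)^2 ∏_{j≠1,s}(a_s-a_j))`. -/
theorem lagrange_coeff_commfact (n : ℕ) (a κ : Fin n → ℂ)
    (ha : Function.Injective a) (k : Fin n) :
    ∃ M : ℂ,
      (∀ i : ℕ,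
        deriv (fun t : ℂ =>
            (Lagrange.interpolate Finset.univ (Function.update a k t) κ).coeff i) (a k)
        = M * deriv (fun t : ℂ =>
            (Lagrange.interpolate Finset.univ a (Function.update κ k t)).coeff i) (κ k))
      ∧ M = (deriv (fun t : ℂ => κ k / ∏ j ∈ Finset.univ.erase k, (t - a j)) (a k)
              + ∑ s ∈ Finset.univ.erase k,
                  κ s / ((a s - a k) ^ 2 *
                    ∏ j ∈ (Finset.univ.erase k).erase s, (a s - a j)))
            * ∏ j ∈ Finset.univ.erase k, (a k - a j) := by
  refine ⟨_, fun m => ?_, rfl⟩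
  have hx : ∀ j ∈ univ.erase k, a k ≠ a j := fun j hj => ha.ne (ne_of_mem_erase hj).symm
  have hnode := Lagrange.hasDerivAt_coeff_interpolate_update_node m κ (mem_univ k) ha.injOn hx
    (Lagrange.hasDerivAt_sub_eval_interpolate_div_eval_nodal κ (κ k) hx)
  have hvalue :=
    Lagrange.hasDerivAt_coeff_interpolate_update_value m κ (mem_univ k) ha.injOn (κ k)
  rw [hnode.deriv, hvalue.deriv, Lagrange.eval_nodal, mul_assoc, mul_div_cancel₀]
  exact prod_ne_zero_iff.2 fun j hj => sub_ne_zero.2 (hx j hj)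
end

section
/- The coefficients F_0,...,F_{n-1} of the Lagrange interpolation polynomial, viewed as functions of the nodes a_1,...,a_n and values κ_1,...,κ_n, pairwise Poisson-commute with respect to the canonical Poisson bracket: {F_i, F_j} = Σ_{k=1}^{n} (∂F_i/∂a_k · ∂F_j/∂κ_k − ∂F_j/∂a_k · ∂F_i/∂κ_k) = 0 for all 0 ≤ i, j ≤ n−1. -/
/-!
Each summand of the bracket vanishes on its own. Changing the value `κ_k` moves the interpolant
along the Lagrange basis polynomial `L_k`, a scalar multiple of `w_k = ∏_{r ≠ k} (X - a_r)`.
Moving the node `a_k` to a nearby `t` changes the interpolant by a polynomial of degree `< n`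
vanishing at the other nodes, i.e. again by a multiple of `w_k`. Hence the coefficient vectors
`∂F/∂a_k` and `∂F/∂κ_k` are both proportional to that of `w_k`, and the `k`-th `2 × 2`
determinant is zero.
-/

open Finset Polynomial Filter Topology

namespace Lagrange

variable {𝕜 ι : Type*} [DecidableEq ι] {s : Finset ι} {v r : ι → 𝕜} {k : ι}

theorem injOn_update_of_forall_ne (hvs : Set.InjOn v s) {t : 𝕜}
    (ht : ∀ j ∈ s.erase k, t ≠ v j) :
    Set.InjOn (Function.update v k t) s := by
  intro x hx y hy hxy
  by_cases hxk : x = k <;> by_cases hyk : y = k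
  · rw [hxk, hyk]
  · rw [hxk, Function.update_self, Function.update_of_ne hyk] at hxy
    exact absurd hxy (ht y (mem_erase.2 ⟨hyk, hy⟩))
  · rw [hyk, Function.update_self, Function.update_of_ne hxk] at hxy
    exact absurd hxy.symm (ht x (mem_erase.2 ⟨hxk, hx⟩))
  · rw [Function.update_of_ne hxk, Function.update_of_ne hyk] at hxy
    exact hvs hx hy hxy

section Field

variable [Field 𝕜]

theorem basis_eq_nodalWeight_smul_nodal_erase (hk : k ∈ s) :
    Lagrange.basis s v k = nodalWeight s v k • nodal (s.erase k) v := by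
  rw [basis_eq_prod_sub_inv_mul_nodal_div hk, nodal_erase_eq_nodal_div hk, smul_eq_C_mul]

theorem interpolate_update_value (hk : k ∈ s) (t : 𝕜) :
    interpolate s v (Function.update r k t)
      = t • Lagrange.basis s v k + ∑ j ∈ s.erase k, r j • Lagrange.basis s v j := by
  rw [interpolate_apply, ← add_sum_erase _ _ hk, Function.update_self, ← smul_eq_C_mul]
  congr 1
  refine sum_congr rfl fun j hj => ?_
  rw [Function.update_of_ne (ne_of_mem_erase hj), smul_eq_C_mul]

theorem interpolate_update_node (hvs : Set.InjOn v s) (hk : k ∈ s) {t : 𝕜}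
    (ht : ∀ j ∈ s.erase k, t ≠ v j) :
    interpolate s (Function.update v k t) r
      = interpolate (s.erase k) v r
        + ((r k - (interpolate (s.erase k) v r).eval t) / (nodal (s.erase k) v).eval t)
          • nodal (s.erase k) v := by
  set P := interpolate (s.erase k) v r
  set w := nodal (s.erase k) v
  have hvs' : Set.InjOn v (s.erase k) := hvs.mono (coe_subset.2 (erase_subset k s))
  have hdeg : (P + ((r k - P.eval t) / w.eval t) • w).degree < #s := by
    refine (degree_add_le _ _).trans_lt (max_lt ?_ ?_)
    · exact (degree_interpolate_lt r hvs').trans (by exact_mod_cast card_erase_lt_of_mem hk)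
    · exact (degree_smul_le _ _).trans_lt
        (by rw [degree_nodal]; exact_mod_cast card_erase_lt_of_mem hk)
  refine (eq_interpolate_of_eval_eq r (injOn_update_of_forall_ne hvs ht) hdeg fun j hj => ?_).symm
  rcases eq_or_ne j k with rfl | hjk
  · rw [Function.update_self, eval_add, eval_smul, smul_eq_mul,
      div_mul_cancel₀ _ (eval_nodal_not_at_node ht), add_sub_cancel]
  · have hj' : j ∈ s.erase k := mem_erase.2 ⟨hjk, hj⟩
    rw [Function.update_of_ne hjk, eval_add, eval_smul, eval_nodal_at_node hj', smul_zero,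
      add_zero, eval_interpolate_at_node r hvs' hj']

end Field

variable [NontriviallyNormedField 𝕜]

theorem hasDerivAt_coeff_interpolate_update_value_s3 (hk : k ∈ s) (i : ℕ) (x : 𝕜) :
    HasDerivAt (fun t => (interpolate s v (Function.update r k t)).coeff i)
      ((Lagrange.basis s v k).coeff i) x := by
  simp_rw [interpolate_update_value hk, coeff_add, coeff_smul, smul_eq_mul]
  exact (hasDerivAt_mul_const _).add_const _

theorem exists_hasDerivAt_coeff_interpolate_update_node (hvs : Set.InjOn v s) (hk : k ∈ s) :
    ∃ c : 𝕜, ∀ i : ℕ,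
      HasDerivAt (fun t => (interpolate s (Function.update v k t) r).coeff i)
        (c * (nodal (s.erase k) v).coeff i) (v k) := by
  set P := interpolate (s.erase k) v r
  set w := nodal (s.erase k) v
  have hnear : ∀ᶠ t in 𝓝 (v k), ∀ j ∈ s.erase k, t ≠ v j :=
    (eventually_all_finset _).2 fun j hj =>
      eventually_ne_nhds fun h => (ne_of_mem_erase hj) (hvs (mem_of_mem_erase hj) hk h.symm)
  have hw : w.eval (v k) ≠ 0 := eval_nodal_not_at_node hnear.self_of_nhds
  obtain ⟨c, hc⟩ : ∃ c, HasDerivAt (fun t => (r k - P.eval t) / w.eval t) c (v k) :=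
    ⟨_, ((P.hasDerivAt (v k)).const_sub (r k)).div (w.hasDerivAt (v k)) hw⟩
  refine ⟨c, fun i =>
    ((hc.mul_const (w.coeff i)).add_const (P.coeff i)).congr_of_eventuallyEq ?_⟩
  filter_upwards [hnear] with t ht
  rw [interpolate_update_node hvs hk ht, coeff_add, coeff_smul, smul_eq_mul, add_comm]

end Lagrange

/-- Proposition `main`: the coefficients of the Lagrange interpolation
polynomial, viewed as functions of the nodes `a` and values `κ`, pairwise Poisson-commute
with respect to the canonical Poisson bracket `{a_r, κ_s} = δ_{rs}`:
`{F_i, F_j} = Σ_k (∂F_i/∂a_k ∂F_j/∂κ_k − ∂F_j/∂a_k ∂F_i/∂κ_k) = 0`. -/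
theorem lagrange_coeffs_poisson_commute (n : ℕ) (a κ : Fin n → ℂ)
    (ha : Function.Injective a) (i j : ℕ) :
    ∑ k : Fin n,
      (deriv (fun t : ℂ =>
          (Lagrange.interpolate Finset.univ (Function.update a k t) κ).coeff i) (a k)
        * deriv (fun t : ℂ =>
          (Lagrange.interpolate Finset.univ a (Function.update κ k t)).coeff j) (κ k)
       - deriv (fun t : ℂ =>
          (Lagrange.interpolate Finset.univ (Function.update a k t) κ).coeff j) (a k)
        * deriv (fun t : ℂ =>
          (Lagrange.interpolate Finset.univ a (Function.update κ k t)).coeff i) (κ k))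
    = 0 := by
  refine sum_eq_zero fun k hk => ?_
  obtain ⟨c, hnode⟩ :=
    Lagrange.exists_hasDerivAt_coeff_interpolate_update_node (r := κ) ha.injOn hk
  have hvalue (i : ℕ) :=
    Lagrange.hasDerivAt_coeff_interpolate_update_value_s3 (v := a) (r := κ) hk i (κ k)
  simp only [(hnode _).deriv, (hvalue _).deriv,
    Lagrange.basis_eq_nodalWeight_smul_nodal_erase hk, coeff_smul, smul_eq_mul]
  ring
end

section
/- For n = 3 nodes (a_1,a_3,a_6) with values (κ_1,κ_3,κ_6), denote D = (a_1−a_3)(a_1−a_6)(a_3−a_6) and define F_0 = [a_1 a_6 (a_6−a_1) κ_3 + a_3^2 (a_6 κ_1 − a_1 κ_6) + a_3 (a_1^2 κ_6 − a_6^2 κ_1)]/D, F_1 = [a_6^2(κ_3−κ_1) + a_3^2(κ_1−κ_6) + a_1^2(κ_6−κ_3)]/D, F_2 = [a_6(κ_3−κ_1) + a_3(κ_1−κ_6) + a_1(κ_6−κ_3)]/D. Then {F_0,F_1} = {F_0,F_2} = {F_1,F_2} = 0 with respect to the canonical Poisson bracket {a_i,κ_i} = 1. -/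
/-!
Let `p(x) = F₀ - F₁ x + F₂ x²` be the interpolant. The `F_j` are linear in `κ`, and `∂F_j/∂κ_l`
is the `j`-th coefficient of the Lagrange basis polynomial `L_l`. Differentiating the
interpolation conditions `p(a_k) = κ_k` in `a_l` shows that `∂p/∂a_l` takes the values
`-p'(a_l) δ_kl` at the nodes, so `∂F_j/∂a_l = -p'(a_l) ∂F_j/∂κ_l`. Hence every term
`∂_{a_l}F_i ∂_{κ_l}F_j - ∂_{a_l}F_j ∂_{κ_l}F_i` of `{F_i, F_j}` vanishes. Since the `F_j` are
invariant under permuting the nodes together with their values, it suffices to differentiate in `a₁`.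
-/

noncomputable section

/-- Constant Lagrange coefficient for three nodes `(a₁,a₃,a₆)`, values `(κ₁,κ₃,κ₆)`. -/
def F0g3 (a1 a3 a6 k1 k3 k6 : ℂ) : ℂ :=
  (a1 * a6 * (a6 - a1) * k3 + a3 ^ 2 * (a6 * k1 - a1 * k6) + a3 * (a1 ^ 2 * k6 - a6 ^ 2 * k1)) /
    ((a1 - a3) * (a1 - a6) * (a3 - a6))

/-- Linear Lagrange coefficient. -/
def F1g3 (a1 a3 a6 k1 k3 k6 : ℂ) : ℂ :=
  (a6 ^ 2 * (k3 - k1) + a3 ^ 2 * (k1 - k6) + a1 ^ 2 * (k6 - k3)) /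
    ((a1 - a3) * (a1 - a6) * (a3 - a6))

/-- Quadratic Lagrange coefficient. -/
def F2g3 (a1 a3 a6 k1 k3 k6 : ℂ) : ℂ :=
  (a6 * (k3 - k1) + a3 * (k1 - k6) + a1 * (k6 - k3)) /
    ((a1 - a3) * (a1 - a6) * (a3 - a6))

/-- Canonical Poisson bracket on functions of `(a₁,a₃,a₆,κ₁,κ₃,κ₆)` with `{a_i,κ_i} = 1`. -/
def pbG3 (f g : ℂ → ℂ → ℂ → ℂ → ℂ → ℂ → ℂ) (a1 a3 a6 k1 k3 k6 : ℂ) : ℂ :=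
    deriv (fun t => f t a3 a6 k1 k3 k6) a1 * deriv (fun t => g a1 a3 a6 t k3 k6) k1
  - deriv (fun t => g t a3 a6 k1 k3 k6) a1 * deriv (fun t => f a1 a3 a6 t k3 k6) k1
  + deriv (fun t => f a1 t a6 k1 k3 k6) a3 * deriv (fun t => g a1 a3 a6 k1 t k6) k3
  - deriv (fun t => g a1 t a6 k1 k3 k6) a3 * deriv (fun t => f a1 a3 a6 k1 t k6) k3
  + deriv (fun t => f a1 a3 t k1 k3 k6) a6 * deriv (fun t => g a1 a3 a6 k1 k3 t) k6
  - deriv (fun t => g a1 a3 t k1 k3 k6) a6 * deriv (fun t => f a1 a3 a6 k1 k3 t) k6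

open Filter Topology

theorem eq_zero_of_quadratic_eval_eq_zero {K : Type*} [Field K] {x y z c₀ c₁ c₂ : K}
    (hxy : x ≠ y) (hxz : x ≠ z) (hyz : y ≠ z)
    (hx : c₀ + c₁ * x + c₂ * x ^ 2 = 0) (hy : c₀ + c₁ * y + c₂ * y ^ 2 = 0)
    (hz : c₀ + c₁ * z + c₂ * z ^ 2 = 0) :
    c₀ = 0 ∧ c₁ = 0 ∧ c₂ = 0 := by
  have hxy' := sub_ne_zero.2 hxy
  have hc₂ : c₂ = 0 := by
    have : c₂ * ((x - y) * (x - z) * (y - z)) = 0 := by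
      linear_combination (y - z) * hx - (x - z) * hy + (x - y) * hz
    simpa [hxy', sub_ne_zero.2 hxz, sub_ne_zero.2 hyz] using this
  have hc₁ : c₁ = 0 := by
    have : c₁ * (x - y) = 0 := by linear_combination hx - hy - (x + y) * (x - y) * hc₂
    simpa [hxy'] using this
  exact ⟨by linear_combination hx - x * hc₁ - x ^ 2 * hc₂, hc₁, hc₂⟩

section ImplicitDifferentiation

variable {𝕜 : Type*} [NontriviallyNormedField 𝕜]

theorem HasDerivAt.quadratic_eval {c₀ c₁ c₂ g : 𝕜 → 𝕜} {c₀' c₁' c₂' g' x : 𝕜}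
    (h₀ : HasDerivAt c₀ c₀' x) (h₁ : HasDerivAt c₁ c₁' x) (h₂ : HasDerivAt c₂ c₂' x)
    (hg : HasDerivAt g g' x) :
    HasDerivAt (fun t => c₀ t + c₁ t * g t + c₂ t * g t ^ 2)
      (c₀' + c₁' * g x + c₂' * g x ^ 2 + (c₁ x + 2 * c₂ x * g x) * g') x := by
  refine ((h₀.add (h₁.mul hg)).add (h₂.mul (hg.pow 2))).congr_deriv ?_
  simp only [Pi.pow_apply]
  ring

theorem deriv_quadratic_eval_eq {c₀ c₁ c₂ g h : 𝕜 → 𝕜} {g' h' x : 𝕜}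
    (h₀ : DifferentiableAt 𝕜 c₀ x) (h₁ : DifferentiableAt 𝕜 c₁ x)
    (h₂ : DifferentiableAt 𝕜 c₂ x) (hg : HasDerivAt g g' x) (hh : HasDerivAt h h' x)
    (heq : ∀ᶠ t in 𝓝 x, c₀ t + c₁ t * g t + c₂ t * g t ^ 2 = h t) :
    deriv c₀ x + deriv c₁ x * g x + deriv c₂ x * g x ^ 2 + (c₁ x + 2 * c₂ x * g x) * g' = h' :=
  (h₀.hasDerivAt.quadratic_eval h₁.hasDerivAt h₂.hasDerivAt hg).unique
    (hh.congr_of_eventuallyEq heq)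

/-- Both `cⱼ'(x)` and `-p'(x) eⱼ'(κ)`, where `p = c₀(x) + c₁(x) X + c₂(x) X²`, solve the
Vandermonde system with right-hand side `(-p'(x), 0, 0)` at the nodes `x, y, z`. -/
theorem deriv_interpolation_coeff {c₀ c₁ c₂ e₀ e₁ e₂ : 𝕜 → 𝕜} {x y z κ u v w u' v' : 𝕜}
    (hxy : x ≠ y) (hxz : x ≠ z) (hyz : y ≠ z)
    (hc₀ : DifferentiableAt 𝕜 c₀ x) (hc₁ : DifferentiableAt 𝕜 c₁ x)
    (hc₂ : DifferentiableAt 𝕜 c₂ x)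
    (hcx : ∀ᶠ t in 𝓝 x, c₀ t + c₁ t * t + c₂ t * t ^ 2 = u)
    (hcy : ∀ᶠ t in 𝓝 x, c₀ t + c₁ t * y + c₂ t * y ^ 2 = v)
    (hcz : ∀ᶠ t in 𝓝 x, c₀ t + c₁ t * z + c₂ t * z ^ 2 = w)
    (he₀ : DifferentiableAt 𝕜 e₀ κ) (he₁ : DifferentiableAt 𝕜 e₁ κ)
    (he₂ : DifferentiableAt 𝕜 e₂ κ)
    (hex : ∀ᶠ t in 𝓝 κ, e₀ t + e₁ t * x + e₂ t * x ^ 2 = t)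
    (hey : ∀ᶠ t in 𝓝 κ, e₀ t + e₁ t * y + e₂ t * y ^ 2 = u')
    (hez : ∀ᶠ t in 𝓝 κ, e₀ t + e₁ t * z + e₂ t * z ^ 2 = v') :
    let s := -(c₁ x + 2 * c₂ x * x)
    deriv c₀ x = s * deriv e₀ κ ∧ deriv c₁ x = s * deriv e₁ κ ∧ deriv c₂ x = s * deriv e₂ κ := by
  intro s
  have dcx := deriv_quadratic_eval_eq hc₀ hc₁ hc₂ (hasDerivAt_id x) (hasDerivAt_const x u) hcx
  have dcy := deriv_quadratic_eval_eq hc₀ hc₁ hc₂ (hasDerivAt_const x y) (hasDerivAt_const x v) hcy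
  have dcz := deriv_quadratic_eval_eq hc₀ hc₁ hc₂ (hasDerivAt_const x z) (hasDerivAt_const x w) hcz
  have dex := deriv_quadratic_eval_eq he₀ he₁ he₂ (hasDerivAt_const κ x) (hasDerivAt_id κ) hex
  have dey := deriv_quadratic_eval_eq he₀ he₁ he₂ (hasDerivAt_const κ y) (hasDerivAt_const κ u') hey
  have dez := deriv_quadratic_eval_eq he₀ he₁ he₂ (hasDerivAt_const κ z) (hasDerivAt_const κ v') hez
  simp only [id] at dcx
  obtain ⟨r₀, r₁, r₂⟩ := eq_zero_of_quadratic_eval_eq_zero hxy hxz hyz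
    (c₀ := deriv c₀ x - s * deriv e₀ κ) (c₁ := deriv c₁ x - s * deriv e₁ κ)
    (c₂ := deriv c₂ x - s * deriv e₂ κ)
    (by linear_combination dcx - s * dex) (by linear_combination dcy - s * dey)
    (by linear_combination dcz - s * dez)
  exact ⟨by linear_combination r₀, by linear_combination r₁, by linear_combination r₂⟩

end ImplicitDifferentiation

section LagrangeG3

/-- `F1g3` is *minus* the linear coefficient of the interpolation polynomial. -/
def lagrangeG3 (a1 a3 a6 k1 k3 k6 x : ℂ) : ℂ :=
  F0g3 a1 a3 a6 k1 k3 k6 + -F1g3 a1 a3 a6 k1 k3 k6 * x + F2g3 a1 a3 a6 k1 k3 k6 * x ^ 2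

def lagrangeSlopeG3 (a1 a3 a6 k1 k3 k6 x : ℂ) : ℂ :=
  -F1g3 a1 a3 a6 k1 k3 k6 + 2 * F2g3 a1 a3 a6 k1 k3 k6 * x

variable (a1 a3 a6 k1 k3 k6 : ℂ)

theorem F0g3_swap13 : F0g3 a1 a3 a6 k1 k3 k6 = F0g3 a3 a1 a6 k3 k1 k6 := by
  unfold F0g3; rw [← neg_div_neg_eq]; congr 1 <;> ring

theorem F0g3_swap16 : F0g3 a1 a3 a6 k1 k3 k6 = F0g3 a6 a3 a1 k6 k3 k1 := by
  unfold F0g3; rw [← neg_div_neg_eq]; congr 1 <;> ring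

theorem F1g3_swap13 : F1g3 a1 a3 a6 k1 k3 k6 = F1g3 a3 a1 a6 k3 k1 k6 := by
  unfold F1g3; rw [← neg_div_neg_eq]; congr 1 <;> ring

theorem F1g3_swap16 : F1g3 a1 a3 a6 k1 k3 k6 = F1g3 a6 a3 a1 k6 k3 k1 := by
  unfold F1g3; rw [← neg_div_neg_eq]; congr 1 <;> ring

theorem F2g3_swap13 : F2g3 a1 a3 a6 k1 k3 k6 = F2g3 a3 a1 a6 k3 k1 k6 := by
  unfold F2g3; rw [← neg_div_neg_eq]; congr 1 <;> ring

theorem F2g3_swap16 : F2g3 a1 a3 a6 k1 k3 k6 = F2g3 a6 a3 a1 k6 k3 k1 := by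
  unfold F2g3; rw [← neg_div_neg_eq]; congr 1 <;> ring

theorem lagrangeG3_swap13 : lagrangeG3 a1 a3 a6 k1 k3 k6 = lagrangeG3 a3 a1 a6 k3 k1 k6 := by
  unfold lagrangeG3; rw [F0g3_swap13, F1g3_swap13, F2g3_swap13]

theorem lagrangeG3_swap16 : lagrangeG3 a1 a3 a6 k1 k3 k6 = lagrangeG3 a6 a3 a1 k6 k3 k1 := by
  unfold lagrangeG3; rw [F0g3_swap16, F1g3_swap16, F2g3_swap16]

theorem lagrangeSlopeG3_swap13 :
    lagrangeSlopeG3 a1 a3 a6 k1 k3 k6 = lagrangeSlopeG3 a3 a1 a6 k3 k1 k6 := by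
  unfold lagrangeSlopeG3; rw [F1g3_swap13, F2g3_swap13]

theorem lagrangeSlopeG3_swap16 :
    lagrangeSlopeG3 a1 a3 a6 k1 k3 k6 = lagrangeSlopeG3 a6 a3 a1 k6 k3 k1 := by
  unfold lagrangeSlopeG3; rw [F1g3_swap16, F2g3_swap16]

variable {a1 a3 a6}

theorem lagrangeG3_eval_a1 (h13 : a1 ≠ a3) (h16 : a1 ≠ a6) (h36 : a3 ≠ a6) :
    lagrangeG3 a1 a3 a6 k1 k3 k6 a1 = k1 := by
  have hD : (a1 - a3) * (a1 - a6) * (a3 - a6) ≠ 0 := by simp [sub_ne_zero, *]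
  unfold lagrangeG3 F0g3 F1g3 F2g3
  field_simp
  ring

theorem lagrangeG3_eval_a3 (h13 : a1 ≠ a3) (h16 : a1 ≠ a6) (h36 : a3 ≠ a6) :
    lagrangeG3 a1 a3 a6 k1 k3 k6 a3 = k3 := by
  rw [lagrangeG3_swap13]; exact lagrangeG3_eval_a1 _ _ _ h13.symm h36 h16

theorem lagrangeG3_eval_a6 (h13 : a1 ≠ a3) (h16 : a1 ≠ a6) (h36 : a3 ≠ a6) :
    lagrangeG3 a1 a3 a6 k1 k3 k6 a6 = k6 := by
  rw [lagrangeG3_swap16]; exact lagrangeG3_eval_a1 _ _ _ h36.symm h16.symm h13.symm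

theorem deriv_a1_eq_neg_slope_mul_deriv_k1 (h13 : a1 ≠ a3) (h16 : a1 ≠ a6) (h36 : a3 ≠ a6) :
    deriv (fun t => F0g3 t a3 a6 k1 k3 k6) a1 =
        -lagrangeSlopeG3 a1 a3 a6 k1 k3 k6 a1 * deriv (fun t => F0g3 a1 a3 a6 t k3 k6) k1 ∧
      deriv (fun t => F1g3 t a3 a6 k1 k3 k6) a1 =
        -lagrangeSlopeG3 a1 a3 a6 k1 k3 k6 a1 * deriv (fun t => F1g3 a1 a3 a6 t k3 k6) k1 ∧
      deriv (fun t => F2g3 t a3 a6 k1 k3 k6) a1 =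
        -lagrangeSlopeG3 a1 a3 a6 k1 k3 k6 a1 * deriv (fun t => F2g3 a1 a3 a6 t k3 k6) k1 := by
  have hF₀ : DifferentiableAt ℂ (fun t => F0g3 t a3 a6 k1 k3 k6) a1 := by
    unfold F0g3; fun_prop (disch := simp [sub_ne_zero, *])
  have hF₁ : DifferentiableAt ℂ (fun t => -F1g3 t a3 a6 k1 k3 k6) a1 := by
    unfold F1g3; fun_prop (disch := simp [sub_ne_zero, *])
  have hF₂ : DifferentiableAt ℂ (fun t => F2g3 t a3 a6 k1 k3 k6) a1 := by
    unfold F2g3; fun_prop (disch := simp [sub_ne_zero, *])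
  have hE₀ : DifferentiableAt ℂ (fun t => F0g3 a1 a3 a6 t k3 k6) k1 := by unfold F0g3; fun_prop
  have hE₁ : DifferentiableAt ℂ (fun t => -F1g3 a1 a3 a6 t k3 k6) k1 := by unfold F1g3; fun_prop
  have hE₂ : DifferentiableAt ℂ (fun t => F2g3 a1 a3 a6 t k3 k6) k1 := by unfold F2g3; fun_prop
  have hnear : ∀ᶠ t in 𝓝 a1, t ≠ a3 ∧ t ≠ a6 := (eventually_ne_nhds h13).and (eventually_ne_nhds h16)
  obtain ⟨d₀, d₁, d₂⟩ := deriv_interpolation_coeff h13 h16 h36 hF₀ hF₁ hF₂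
    (hnear.mono fun t ht => lagrangeG3_eval_a1 k1 k3 k6 ht.1 ht.2 h36)
    (hnear.mono fun t ht => lagrangeG3_eval_a3 k1 k3 k6 ht.1 ht.2 h36)
    (hnear.mono fun t ht => lagrangeG3_eval_a6 k1 k3 k6 ht.1 ht.2 h36) hE₀ hE₁ hE₂
    (.of_forall fun t => lagrangeG3_eval_a1 t k3 k6 h13 h16 h36)
    (.of_forall fun t => lagrangeG3_eval_a3 t k3 k6 h13 h16 h36)
    (.of_forall fun t => lagrangeG3_eval_a6 t k3 k6 h13 h16 h36)
  refine ⟨d₀, ?_, d₂⟩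
  simpa only [deriv.fun_neg, mul_neg, neg_inj, lagrangeSlopeG3] using d₁

end LagrangeG3

section PoissonBracket

variable {f g : ℂ → ℂ → ℂ → ℂ → ℂ → ℂ → ℂ} {a1 a3 a6 k1 k3 k6 : ℂ}

def HasProportionalPartials (f : ℂ → ℂ → ℂ → ℂ → ℂ → ℂ → ℂ) (μ1 μ3 μ6 a1 a3 a6 k1 k3 k6 : ℂ) :
    Prop :=
  deriv (fun t => f t a3 a6 k1 k3 k6) a1 = μ1 * deriv (fun t => f a1 a3 a6 t k3 k6) k1 ∧
    deriv (fun t => f a1 t a6 k1 k3 k6) a3 = μ3 * deriv (fun t => f a1 a3 a6 k1 t k6) k3 ∧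
    deriv (fun t => f a1 a3 t k1 k3 k6) a6 = μ6 * deriv (fun t => f a1 a3 a6 k1 k3 t) k6

theorem pbG3_eq_zero_of_hasProportionalPartials {μ1 μ3 μ6 : ℂ}
    (hf : HasProportionalPartials f μ1 μ3 μ6 a1 a3 a6 k1 k3 k6)
    (hg : HasProportionalPartials g μ1 μ3 μ6 a1 a3 a6 k1 k3 k6) :
    pbG3 f g a1 a3 a6 k1 k3 k6 = 0 := by
  obtain ⟨hf1, hf3, hf6⟩ := hf
  obtain ⟨hg1, hg3, hg6⟩ := hg
  rw [pbG3, hf1, hf3, hf6, hg1, hg3, hg6]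
  ring

theorem hasProportionalPartials_of_swap
    (hf13 : ∀ a1 a3 a6 k1 k3 k6, f a1 a3 a6 k1 k3 k6 = f a3 a1 a6 k3 k1 k6)
    (hf16 : ∀ a1 a3 a6 k1 k3 k6, f a1 a3 a6 k1 k3 k6 = f a6 a3 a1 k6 k3 k1)
    (hnode : ∀ a1 a3 a6 k1 k3 k6 : ℂ, a1 ≠ a3 → a1 ≠ a6 → a3 ≠ a6 →
      deriv (fun t => f t a3 a6 k1 k3 k6) a1 =
        -lagrangeSlopeG3 a1 a3 a6 k1 k3 k6 a1 * deriv (fun t => f a1 a3 a6 t k3 k6) k1)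
    (h13 : a1 ≠ a3) (h16 : a1 ≠ a6) (h36 : a3 ≠ a6) :
    HasProportionalPartials f (-lagrangeSlopeG3 a1 a3 a6 k1 k3 k6 a1)
      (-lagrangeSlopeG3 a1 a3 a6 k1 k3 k6 a3) (-lagrangeSlopeG3 a1 a3 a6 k1 k3 k6 a6)
      a1 a3 a6 k1 k3 k6 := by
  refine ⟨hnode _ _ _ _ _ _ h13 h16 h36, ?_, ?_⟩
  · have ha : (fun t => f a1 t a6 k1 k3 k6) = fun t => f t a1 a6 k3 k1 k6 :=
      funext fun t => hf13 a1 t a6 k1 k3 k6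
    have hk : (fun t => f a1 a3 a6 k1 t k6) = fun t => f a3 a1 a6 t k1 k6 :=
      funext fun t => hf13 a1 a3 a6 k1 t k6
    rw [ha, hk, lagrangeSlopeG3_swap13]
    exact hnode _ _ _ _ _ _ h13.symm h36 h16
  · have ha : (fun t => f a1 a3 t k1 k3 k6) = fun t => f t a3 a1 k6 k3 k1 :=
      funext fun t => hf16 a1 a3 t k1 k3 k6
    have hk : (fun t => f a1 a3 a6 k1 k3 t) = fun t => f a6 a3 a1 t k3 k1 :=
      funext fun t => hf16 a1 a3 a6 k1 k3 t
    rw [ha, hk, lagrangeSlopeG3_swap16]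
    exact hnode _ _ _ _ _ _ h36.symm h16.symm h13.symm

end PoissonBracket

theorem hasProportionalPartials_lagrangeCoeffs {a1 a3 a6 : ℂ} (k1 k3 k6 : ℂ)
    (h13 : a1 ≠ a3) (h16 : a1 ≠ a6) (h36 : a3 ≠ a6) :
    let μ x := -lagrangeSlopeG3 a1 a3 a6 k1 k3 k6 x
    HasProportionalPartials F0g3 (μ a1) (μ a3) (μ a6) a1 a3 a6 k1 k3 k6 ∧
      HasProportionalPartials F1g3 (μ a1) (μ a3) (μ a6) a1 a3 a6 k1 k3 k6 ∧
      HasProportionalPartials F2g3 (μ a1) (μ a3) (μ a6) a1 a3 a6 k1 k3 k6 :=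
  ⟨hasProportionalPartials_of_swap F0g3_swap13 F0g3_swap16
      (fun _ _ _ _ _ _ h13 h16 h36 => (deriv_a1_eq_neg_slope_mul_deriv_k1 _ _ _ h13 h16 h36).1)
      h13 h16 h36,
    hasProportionalPartials_of_swap F1g3_swap13 F1g3_swap16
      (fun _ _ _ _ _ _ h13 h16 h36 => (deriv_a1_eq_neg_slope_mul_deriv_k1 _ _ _ h13 h16 h36).2.1)
      h13 h16 h36,
    hasProportionalPartials_of_swap F2g3_swap13 F2g3_swap16
      (fun _ _ _ _ _ _ h13 h16 h36 => (deriv_a1_eq_neg_slope_mul_deriv_k1 _ _ _ h13 h16 h36).2.2)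
      h13 h16 h36⟩

/-- for three pairwise distinct nodes, the Lagrange coefficients
`F₀, F₁, F₂` pairwise Poisson-commute. -/
theorem genus3_integrals_commute (a1 a3 a6 k1 k3 k6 : ℂ)
    (h13 : a1 ≠ a3) (h16 : a1 ≠ a6) (h36 : a3 ≠ a6) :
    pbG3 F0g3 F1g3 a1 a3 a6 k1 k3 k6 = 0 ∧
    pbG3 F0g3 F2g3 a1 a3 a6 k1 k3 k6 = 0 ∧
    pbG3 F1g3 F2g3 a1 a3 a6 k1 k3 k6 = 0 := by
  obtain ⟨h₀, h₁, h₂⟩ := hasProportionalPartials_lagrangeCoeffs k1 k3 k6 h13 h16 h36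
  exact ⟨pbG3_eq_zero_of_hasProportionalPartials h₀ h₁,
    pbG3_eq_zero_of_hasProportionalPartials h₀ h₂, pbG3_eq_zero_of_hasProportionalPartials h₁ h₂⟩
end
end

section
/- Along any solution of the canonical Hamiltonian system for a Hamiltonian H that is a polynomial in the Lagrange coefficients F_0,...,F_{n−1}, each coefficient F_i is a constant of motion: d/dt F_i(a(t),κ(t)) = 0. -/
/-!
Write `L = ∑ₖ κₖ ℓₖ` for the interpolation polynomial, with Lagrange basis `ℓₖ`, so that
`Fᵢ = ∑ₖ κₖ coeffᵢ ℓₖ` and `∂Fᵢ/∂κₖ = coeffᵢ ℓₖ`. Moving the node `aₖ` while keeping the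
identities `L(aₘ) = κₘ`, the derivative `∂L/∂aₖ` is a polynomial of degree `< n` that vanishes
at `aₘ` for `m ≠ k` and equals `-L'(aₖ)` at `aₖ`. Hence `∂L/∂aₖ = -L'(aₖ) ℓₖ`, i.e.
`∂Fᵢ/∂aₖ = -L'(aₖ) ∂Fᵢ/∂κₖ` with a factor independent of `i`. This makes every Poisson bracket
`{Fᵢ, Fⱼ} = ∑ₖ (∂Fᵢ/∂aₖ ∂Fⱼ/∂κₖ - ∂Fᵢ/∂κₖ ∂Fⱼ/∂aₖ)` vanish, and along the flow
`dFᵢ/dt = {Fᵢ, H} = ∑ⱼ (∂ⱼP)(F) {Fᵢ, Fⱼ} = 0`.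
-/

open Finset Polynomial Function Filter Topology

section PolynomialCurve

variable {𝕜 : Type*} [NontriviallyNormedField 𝕜] {p : 𝕜 → 𝕜[X]} {u₀ : 𝕜} {N : ℕ}

theorem Polynomial.eval_eq_sum_fin_of_degree_lt {R : Type*} [Semiring R] {q : R[X]}
    (hq : q.degree < N) (x : R) : q.eval x = ∑ i : Fin N, q.coeff i * x ^ (i : ℕ) :=
  eval_eq_sum_degreeLTEquiv (mem_degreeLT.2 hq) x

theorem exists_hasDerivAt_coeff (hdeg : ∀ᶠ u in 𝓝 u₀, (p u).degree < N)
    (hd : ∀ i < N, DifferentiableAt 𝕜 (fun u => (p u).coeff i) u₀) :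
    ∃ q : 𝕜[X], q.degree < N ∧ ∀ i, HasDerivAt (fun u => (p u).coeff i) (q.coeff i) u₀ := by
  set q : 𝕜[X] := ∑ j ∈ range N, monomial j (deriv (fun u => (p u).coeff j) u₀)
  have hcoeff (i : ℕ) : q.coeff i = if i < N then deriv (fun u => (p u).coeff i) u₀ else 0 := by
    simp [q, coeff_monomial]
  have hq : q.degree < N := by
    rw [degree_lt_iff_coeff_zero]
    intro i hi
    simp [hcoeff, not_lt.2 hi]
  refine ⟨q, hq, fun i => ?_⟩
  rcases lt_or_ge i N with hi | hi
  · rw [hcoeff, if_pos hi]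
    exact (hd i hi).hasDerivAt
  · rw [hcoeff, if_neg (not_lt.2 hi)]
    refine (hasDerivAt_const u₀ (0 : 𝕜)).congr_of_eventuallyEq (hdeg.mono fun u hu => ?_)
    exact coeff_eq_zero_of_degree_lt (hu.trans_le (by exact_mod_cast hi))

theorem hasDerivAt_eval_of_hasDerivAt_coeff {q : 𝕜[X]} {x : 𝕜 → 𝕜} {x' : 𝕜}
    (hdeg : ∀ᶠ u in 𝓝 u₀, (p u).degree < N) (hq : q.degree < N)
    (hpq : ∀ i, HasDerivAt (fun u => (p u).coeff i) (q.coeff i) u₀) (hx : HasDerivAt x x' u₀) :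
    HasDerivAt (fun u => (p u).eval (x u))
      (q.eval (x u₀) + (p u₀).derivative.eval (x u₀) * x') u₀ := by
  have hpow (i : ℕ) (y : 𝕜) : HasDerivAt (fun y => y ^ i) (i * y ^ (i - 1)) y := by
    simpa using hasDerivAt_pow i y
  have hderiv : (p u₀).derivative.eval (x u₀)
      = ∑ i : Fin N, (p u₀).coeff i * (i * x u₀ ^ ((i : ℕ) - 1)) := by
    have hsum := HasDerivAt.fun_sum (u := univ) fun (i : Fin N) _ =>
      (hpow i (x u₀)).const_mul ((p u₀).coeff i)
    refine (Polynomial.hasDerivAt _ _).unique (hsum.congr_of_eventuallyEq ?_)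
    exact Eventually.of_forall fun y => eval_eq_sum_fin_of_degree_lt hdeg.self_of_nhds y
  have hsum := HasDerivAt.fun_sum (u := univ) fun (i : Fin N) _ => (hpq i).mul (hx.fun_pow i)
  refine (hsum.congr_of_eventuallyEq
    (hdeg.mono fun u hu => eval_eq_sum_fin_of_degree_lt hu (x u))).congr_deriv ?_
  rw [eval_eq_sum_fin_of_degree_lt hq, hderiv, sum_mul, ← sum_add_distrib]
  exact sum_congr rfl fun i _ => by ring

end PolynomialCurve

section MvPolynomialChainRule

variable {𝕜 : Type*} [NontriviallyNormedField 𝕜]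

theorem hasDerivAt_mvPolynomial_eval {σ : Type*} [Fintype σ] {g : σ → 𝕜 → 𝕜} {g' : σ → 𝕜}
    {x : 𝕜} (hg : ∀ j, HasDerivAt (g j) (g' j) x) (P : MvPolynomial σ 𝕜) :
    HasDerivAt (fun u => MvPolynomial.eval (fun j => g j u) P)
      (∑ j, MvPolynomial.eval (fun j => g j x) (MvPolynomial.pderiv j P) * g' j) x := by
  classical
  induction P using MvPolynomial.induction_on with
  | C c => simpa using hasDerivAt_const x c
  | add P Q hP hQ => simpa [add_mul, sum_add_distrib] using hP.fun_add hQ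
  | mul_X P i hP =>
    simp only [map_mul, MvPolynomial.eval_X]
    refine (hP.fun_mul (hg i)).congr_deriv ?_
    simp only [Derivation.leibniz, MvPolynomial.pderiv_X, smul_eq_mul, map_add, map_mul,
      MvPolynomial.eval_X, Pi.single_apply, mul_one, mul_zero, apply_ite, ite_mul, map_zero,
      zero_mul, add_mul, sum_add_distrib, sum_ite_eq, mem_univ, if_true, sum_mul]
    rw [add_comm]
    exact congrArg₂ _ rfl (sum_congr rfl fun _ _ => by ring)

end MvPolynomialChainRule

noncomputable section PoissonBracket

variable {𝕜 ι : Type*} [NontriviallyNormedField 𝕜] [Fintype ι] [DecidableEq ι]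
  {f : (ι → 𝕜) × (ι → 𝕜) → 𝕜} {p : (ι → 𝕜) × (ι → 𝕜)}
  {L : (ι → 𝕜) × (ι → 𝕜) →L[𝕜] 𝕜}

def partialFst (f : (ι → 𝕜) × (ι → 𝕜) → 𝕜) (p : (ι → 𝕜) × (ι → 𝕜)) (k : ι) : 𝕜 :=
  deriv (fun u => f (update p.1 k u, p.2)) (p.1 k)

def partialSnd (f : (ι → 𝕜) × (ι → 𝕜) → 𝕜) (p : (ι → 𝕜) × (ι → 𝕜)) (k : ι) : 𝕜 :=
  deriv (fun u => f (p.1, update p.2 k u)) (p.2 k)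

def poissonBracket (f g : (ι → 𝕜) × (ι → 𝕜) → 𝕜) (p : (ι → 𝕜) × (ι → 𝕜)) : 𝕜 :=
  ∑ k, (partialFst f p k * partialSnd g p k - partialSnd f p k * partialFst g p k)

theorem HasFDerivAt.hasDerivAt_update_fst (hf : HasFDerivAt f L p) (k : ι) :
    HasDerivAt (fun u => f (update p.1 k u, p.2)) (L (Pi.single k 1, 0)) (p.1 k) :=
  hf.comp_hasDerivAt_of_eq _ ((hasDerivAt_update p.1 k _).prodMk (hasDerivAt_const _ p.2))
    (by simp)

theorem HasFDerivAt.hasDerivAt_update_snd (hf : HasFDerivAt f L p) (k : ι) :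
    HasDerivAt (fun u => f (p.1, update p.2 k u)) (L (0, Pi.single k 1)) (p.2 k) :=
  hf.comp_hasDerivAt_of_eq _ ((hasDerivAt_const _ p.1).prodMk (hasDerivAt_update p.2 k _))
    (by simp)

theorem DifferentiableAt.hasDerivAt_partialFst (hf : DifferentiableAt 𝕜 f p) (k : ι) :
    HasDerivAt (fun u => f (update p.1 k u, p.2)) (partialFst f p k) (p.1 k) :=
  (hf.hasFDerivAt.hasDerivAt_update_fst k).differentiableAt.hasDerivAt

theorem DifferentiableAt.hasDerivAt_partialSnd (hf : DifferentiableAt 𝕜 f p) (k : ι) :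
    HasDerivAt (fun u => f (p.1, update p.2 k u)) (partialSnd f p k) (p.2 k) :=
  (hf.hasFDerivAt.hasDerivAt_update_snd k).differentiableAt.hasDerivAt

theorem HasFDerivAt.apply_eq_sum_partial (hf : HasFDerivAt f L p) (w : (ι → 𝕜) × (ι → 𝕜)) :
    L w = ∑ k, (partialFst f p k * w.1 k + partialSnd f p k * w.2 k) := by
  have hw : w = ∑ k, (w.1 k • ((Pi.single k 1 : ι → 𝕜), (0 : ι → 𝕜))
      + w.2 k • ((0 : ι → 𝕜), (Pi.single k 1 : ι → 𝕜))) := by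
    ext k <;> simp [Prod.fst_sum, Prod.snd_sum, Pi.single_apply]
  conv_lhs => rw [hw]
  simp only [map_sum, map_add, map_smul, smul_eq_mul, (hf.hasDerivAt_update_fst _).deriv.symm,
    (hf.hasDerivAt_update_snd _).deriv.symm, partialFst, partialSnd, mul_comm]

theorem deriv_comp_eq_poissonBracket [NormedAlgebra ℝ 𝕜] {H : (ι → 𝕜) × (ι → 𝕜) → 𝕜}
    {a κ : ℝ → ι → 𝕜} {t : ℝ} (hf : DifferentiableAt 𝕜 f (a t, κ t))
    (ha : ∀ k, DifferentiableAt ℝ (fun s => a s k) t)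
    (hκ : ∀ k, DifferentiableAt ℝ (fun s => κ s k) t)
    (hamA : ∀ k, deriv (fun s => a s k) t = partialSnd H (a t, κ t) k)
    (hamK : ∀ k, deriv (fun s => κ s k) t = -partialFst H (a t, κ t) k) :
    deriv (fun s => f (a s, κ s)) t = poissonBracket f H (a t, κ t) := by
  have hγ : HasDerivAt (fun s => (a s, κ s))
      (fun k => deriv (fun s => a s k) t, fun k => deriv (fun s => κ s k) t) t :=
    (hasDerivAt_pi.2 fun k => (ha k).hasDerivAt).prodMk
      (hasDerivAt_pi.2 fun k => (hκ k).hasDerivAt)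
  have hcomp : HasDerivAt (fun s => f (a s, κ s)) _ t :=
    (hf.hasFDerivAt.restrictScalars ℝ).comp_hasDerivAt t hγ
  rw [hcomp.deriv, ContinuousLinearMap.coe_restrictScalars', hf.hasFDerivAt.apply_eq_sum_partial]
  simp only [hamA, hamK, poissonBracket]
  exact sum_congr rfl fun k _ => by ring

theorem poissonBracket_mvPolynomial_eval_right {σ : Type*} [Fintype σ]
    {g : σ → (ι → 𝕜) × (ι → 𝕜) → 𝕜} (hg : ∀ j, DifferentiableAt 𝕜 (g j) p)
    (f : (ι → 𝕜) × (ι → 𝕜) → 𝕜) (P : MvPolynomial σ 𝕜) :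
    poissonBracket f (fun q => MvPolynomial.eval (fun j => g j q) P) p
      = ∑ j, MvPolynomial.eval (fun j => g j p) (MvPolynomial.pderiv j P)
          * poissonBracket f (g j) p := by
  have hFst (k : ι) : partialFst (fun q => MvPolynomial.eval (fun j => g j q) P) p k
      = ∑ j, MvPolynomial.eval (fun j => g j p) (MvPolynomial.pderiv j P)
          * partialFst (g j) p k := by
    have h := hasDerivAt_mvPolynomial_eval (fun j => (hg j).hasDerivAt_partialFst k) P
    simp only [update_eq_self] at h
    exact h.deriv
  have hSnd (k : ι) : partialSnd (fun q => MvPolynomial.eval (fun j => g j q) P) p k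
      = ∑ j, MvPolynomial.eval (fun j => g j p) (MvPolynomial.pderiv j P)
          * partialSnd (g j) p k := by
    have h := hasDerivAt_mvPolynomial_eval (fun j => (hg j).hasDerivAt_partialSnd k) P
    simp only [update_eq_self] at h
    exact h.deriv
  simp only [poissonBracket, hFst, hSnd, mul_sum, ← sum_sub_distrib]
  rw [sum_comm]
  exact sum_congr rfl fun j _ => sum_congr rfl fun k _ => by ring

end PoissonBracket

section LagrangeCoefficients

variable {𝕜 : Type*} [NontriviallyNormedField 𝕜]

theorem Lagrange.coeff_interpolate {ι : Type*} [DecidableEq ι] (s : Finset ι) (v r : ι → 𝕜)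
    (i : ℕ) :
    (Lagrange.interpolate s v r).coeff i = ∑ m ∈ s, r m * (Lagrange.basis s v m).coeff i := by
  simp [Lagrange.interpolate_apply, finsetSum_coeff, coeff_C_mul]

variable {E : Type*} [NormedAddCommGroup E] [NormedSpace 𝕜 E] {x : E}

theorem differentiableAt_coeff_prod {β : Type*} (s : Finset β) {p : β → E → 𝕜[X]}
    (hp : ∀ j ∈ s, ∀ i, DifferentiableAt 𝕜 (fun y => (p j y).coeff i) x) (i : ℕ) :
    DifferentiableAt 𝕜 (fun y => (∏ j ∈ s, p j y).coeff i) x := by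
  classical
  induction s using Finset.induction_on generalizing i with
  | empty => simp
  | insert b s hb ih =>
    simp only [prod_insert hb, coeff_mul]
    exact DifferentiableAt.fun_sum fun m _ =>
      (hp b (mem_insert_self b s) m.1).mul (ih (fun j hj => hp j (mem_insert_of_mem hj)) m.2)

theorem differentiableAt_coeff_basisDivisor {f g : E → 𝕜} (hf : DifferentiableAt 𝕜 f x)
    (hg : DifferentiableAt 𝕜 g x) (hfg : f x ≠ g x) (i : ℕ) :
    DifferentiableAt 𝕜 (fun y => (Lagrange.basisDivisor (f y) (g y)).coeff i) x := by
  simp only [Lagrange.basisDivisor, coeff_C_mul, coeff_sub, coeff_X, coeff_C]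
  refine ((hf.sub hg).inv (sub_ne_zero.2 hfg)).mul ((differentiableAt_const _).sub ?_)
  split_ifs
  exacts [hg, differentiableAt_const _]

theorem differentiableAt_coeff_basis {ι : Type*} [Fintype ι] [DecidableEq ι] {s : Finset ι}
    {v : ι → 𝕜} (hv : Set.InjOn v s) {k : ι} (hk : k ∈ s) (i : ℕ) :
    DifferentiableAt 𝕜 (fun w : ι → 𝕜 => (Lagrange.basis s w k).coeff i) v :=
  differentiableAt_coeff_prod _ (fun j hj =>
    differentiableAt_coeff_basisDivisor (differentiableAt_apply k v) (differentiableAt_apply j v)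
      (hv.ne hk (mem_of_mem_erase hj) (ne_of_mem_erase hj).symm)) i

theorem Function.Injective.eventually_injective_update {α β : Type*} [Finite α] [DecidableEq α]
    [TopologicalSpace β] [T1Space β] {v : α → β} (hv : Injective v) (k : α) :
    ∀ᶠ u in 𝓝 (v k), Injective (update v k u) := by
  have hfar : ∀ᶠ u in 𝓝 (v k), ∀ j, j ≠ k → u ≠ v j := by
    refine eventually_all.2 fun j => ?_
    by_cases hj : j = k
    · exact Eventually.of_forall fun _ h => absurd hj h
    · exact (eventually_ne_nhds (hv.ne (Ne.symm hj))).mono fun _ hu _ => hu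
  filter_upwards [hfar] with u hu x y hxy
  simp only [update_apply] at hxy
  split_ifs at hxy with hx hy hy
  · rw [hx, hy]
  · exact absurd hxy (hu y hy)
  · exact absurd hxy.symm (hu x hx)
  · exact hv hxy

variable {ι : Type*} [Fintype ι] [DecidableEq ι]

noncomputable def lagrangeCoeff (i : ℕ) (p : (ι → 𝕜) × (ι → 𝕜)) : 𝕜 :=
  (Lagrange.interpolate univ p.1 p.2).coeff i

theorem differentiableAt_lagrangeCoeff {p : (ι → 𝕜) × (ι → 𝕜)} (hp : Injective p.1) (i : ℕ) :
    DifferentiableAt 𝕜 (lagrangeCoeff i) p := by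
  have h : lagrangeCoeff (𝕜 := 𝕜) (ι := ι) i
      = fun q => ∑ m, q.2 m * (Lagrange.basis univ q.1 m).coeff i :=
    funext fun q => Lagrange.coeff_interpolate _ _ _ _
  rw [h]
  exact DifferentiableAt.fun_sum fun m _ =>
    (differentiableAt_pi.1 differentiableAt_snd m).fun_mul
      ((differentiableAt_coeff_basis hp.injOn (mem_univ m) i).comp p differentiableAt_fst)

theorem hasDerivAt_lagrangeCoeff_update_snd (v r : ι → 𝕜) (k : ι) (i : ℕ) (y : 𝕜) :
    HasDerivAt (fun u => lagrangeCoeff i (v, update r k u))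
      ((Lagrange.basis univ v k).coeff i) y := by
  simp only [lagrangeCoeff, Lagrange.coeff_interpolate]
  refine (HasDerivAt.fun_sum fun m _ =>
    (hasDerivAt_pi.1 (hasDerivAt_update r k y) m).mul_const _).congr_deriv ?_
  simp [Pi.single_apply]

theorem hasDerivAt_lagrangeCoeff_update_fst {v : ι → 𝕜} (hv : Injective v) (r : ι → 𝕜) (k : ι)
    (i : ℕ) :
    HasDerivAt (fun u => lagrangeCoeff i (update v k u, r))
      (-(Lagrange.interpolate univ v r).derivative.eval (v k)
        * (Lagrange.basis univ v k).coeff i) (v k) := by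
  set P : 𝕜 → 𝕜[X] := fun u => Lagrange.interpolate univ (update v k u) r with hP
  have hPv : P (v k) = Lagrange.interpolate univ v r := by simp [hP]
  have hinj := hv.eventually_injective_update k
  have hdeg : ∀ᶠ u in 𝓝 (v k), (P u).degree < Fintype.card ι :=
    hinj.mono fun u hu => Lagrange.degree_interpolate_lt _ hu.injOn
  obtain ⟨q, hq, hPq⟩ := exists_hasDerivAt_coeff hdeg fun i _ =>
    ((differentiableAt_lagrangeCoeff (p := (v, r)) hv i).hasDerivAt_partialFst k).differentiableAt
  set c := -(Lagrange.interpolate univ v r).derivative.eval (v k)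
  have hnode (m : ι) : q.eval (v m) = (Pi.single k c : ι → 𝕜) m := by
    have hconst : HasDerivAt (fun u => (P u).eval (update v k u m)) 0 (v k) :=
      (hasDerivAt_const _ (r m)).congr_of_eventuallyEq (hinj.mono fun u hu =>
        Lagrange.eval_interpolate_at_node r hu.injOn (mem_univ m))
    have h := (hasDerivAt_eval_of_hasDerivAt_coeff hdeg hq hPq
      (hasDerivAt_pi.1 (hasDerivAt_update v k (v k)) m)).unique hconst
    rw [hPv, update_eq_self] at h
    rcases eq_or_ne m k with rfl | hm
    · simp only [Pi.single_eq_same, mul_one] at h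
      simp only [Pi.single_eq_same, c]
      linear_combination h
    · simpa [Pi.single_eq_of_ne hm] using h
  have hq_eq : q = Lagrange.interpolate univ v (Pi.single k c) :=
    Lagrange.eq_interpolate_of_eval_eq _ hv.injOn (by simpa using hq) fun m _ => hnode m
  have h := hPq i
  rw [hq_eq, Lagrange.coeff_interpolate] at h
  simp only [Pi.single_apply, ite_mul, zero_mul, sum_ite_eq', mem_univ, if_true] at h
  exact h

theorem partialSnd_lagrangeCoeff (p : (ι → 𝕜) × (ι → 𝕜)) (k : ι) (i : ℕ) :
    partialSnd (lagrangeCoeff i) p k = (Lagrange.basis univ p.1 k).coeff i :=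
  (hasDerivAt_lagrangeCoeff_update_snd p.1 p.2 k i _).deriv

theorem partialFst_lagrangeCoeff {p : (ι → 𝕜) × (ι → 𝕜)} (hp : Injective p.1) (k : ι) (i : ℕ) :
    partialFst (lagrangeCoeff i) p k
      = -(Lagrange.interpolate univ p.1 p.2).derivative.eval (p.1 k)
          * partialSnd (lagrangeCoeff i) p k := by
  rw [partialSnd_lagrangeCoeff]
  exact (hasDerivAt_lagrangeCoeff_update_fst hp p.2 k i).deriv

theorem poissonBracket_lagrangeCoeff {p : (ι → 𝕜) × (ι → 𝕜)} (hp : Injective p.1) (i j : ℕ) :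
    poissonBracket (lagrangeCoeff i) (lagrangeCoeff j) p = 0 := by
  simp only [poissonBracket, partialFst_lagrangeCoeff hp]
  exact sum_eq_zero fun k _ => by ring

end LagrangeCoefficients

/-- along any solution of the canonical Hamiltonian system whose
Hamiltonian is a polynomial `P` in the Lagrange coefficients `F₀, …, F_{n−1}`, each
Lagrange coefficient is a constant of motion. -/
theorem lagrange_coeffs_constants_of_motion (n : ℕ)
    (P : MvPolynomial (Fin n) ℂ)
    (H : ((Fin n → ℂ) × (Fin n → ℂ)) → ℂ)
    (hH : H = fun p =>
      MvPolynomial.eval (fun i : Fin n =>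
        (Lagrange.interpolate Finset.univ p.1 p.2).coeff (i : ℕ)) P)
    (a κ : ℝ → Fin n → ℂ)
    (ha : ∀ t, Function.Injective (a t))
    (hda : ∀ k, Differentiable ℝ fun t => a t k)
    (hdκ : ∀ k, Differentiable ℝ fun t => κ t k)
    (hamA : ∀ (t : ℝ) (k : Fin n),
      deriv (fun s : ℝ => a s k) t
        = deriv (fun u : ℂ => H (a t, Function.update (κ t) k u)) (κ t k))
    (hamK : ∀ (t : ℝ) (k : Fin n),
      deriv (fun s : ℝ => κ s k) t
        = - deriv (fun u : ℂ => H (Function.update (a t) k u, κ t)) (a t k)) :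
    ∀ (i : ℕ) (t : ℝ),
      deriv (fun s : ℝ =>
        (Lagrange.interpolate Finset.univ (a s) (κ s)).coeff i) t = 0 := by
  intro i t
  have hF (j : ℕ) : DifferentiableAt ℂ (lagrangeCoeff j) (a t, κ t) :=
    differentiableAt_lagrangeCoeff (ha t) j
  have hflow : deriv (fun s => lagrangeCoeff i (a s, κ s)) t
      = poissonBracket (lagrangeCoeff i) H (a t, κ t) :=
    deriv_comp_eq_poissonBracket (hF i) (fun k => hda k t) (fun k => hdκ k t) (hamA t) (hamK t)
  have hH' : H = fun p => MvPolynomial.eval (fun j : Fin n => lagrangeCoeff j p) P := hH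
  refine hflow.trans ?_
  rw [hH', poissonBracket_mvPolynomial_eval_right (g := fun j : Fin n => lagrangeCoeff j)
    (fun j => hF j)]
  simp only [poissonBracket_lagrangeCoeff (p := (a t, κ t)) (ha t), mul_zero, sum_const_zero]
end
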